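/- Let T₁ : H₁ → H₂ and T₂ : H₂ → H₃ be closed densely defined operators with im(T₁) ⊆ ker(T₂), and suppose the Laplacians Δ₁ = T₁*∘T₁, Δ_mid = T₁∘T₁* + T₂*∘T₂, Δ₂ = T₂∘T₂* all have discrete spectrum with trace class heat semigroups. Then for every t > 0, Tr(e^{-tΔ₁}) − Tr(e^{-tΔ_mid}) + Tr(e^{-tΔ₂}) = dim ker(Δ₁) − dim ker(Δ_mid) + dim ker(Δ₂) (a McKean–Singer formula: the alternating sum of heat traces is independent of t and equals the Euler characteristic of the complex). -/

import Mathlib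

/-!
Each heat trace is a sum over eigenvalues: `∑ₖ e^{-t λₖ} = ∑_λ m(λ) e^{-t λ}`, where `m(λ)`, the
number of basis vectors with eigenvalue `λ`, is the dimension of the `λ`-eigenspace (an
eigenvector of a symmetric operator is orthogonal to all basis vectors with another eigenvalue).
For `λ ≠ 0` the maps `w ↦ (T₁* w, T₂ w)` and `(u, v) ↦ T₁ u + T₂* v` between the `λ`-eigenspaces
of `Δ_mid` and of `Δ₁ × Δ₂` compose, in both orders, to multiplication by `λ`, because
`T₂ T₁ = 0` and `T₁* T₂* = 0`. Hence `m_mid(λ) = m₁(λ) + m₂(λ)`, the alternating sum only keeps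
the terms at `λ = 0`, and those are the dimensions of the kernels.
-/

namespace Paper

/-- Composition `S ∘ T` of partially defined (unbounded) linear maps, with domain
`{x ∈ dom T | T x ∈ dom S}` and value `S (T x)`. -/
noncomputable def pcomp {R E F G : Type*} [Ring R] [AddCommGroup E] [Module R E]
    [AddCommGroup F] [Module R F] [AddCommGroup G] [Module R G]
    (S : F →ₗ.[R] G) (T : E →ₗ.[R] F) : E →ₗ.[R] G where
  domain := (S.domain.comap T.toFun).map T.domain.subtype
  toFun :=
    (S.toFun.comp (((T.toFun.comp (S.domain.comap T.toFun).subtype)).codRestrict S.domain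
      fun c => c.2)).comp
      (Submodule.equivMapOfInjective T.domain.subtype (Submodule.injective_subtype T.domain)
        (S.domain.comap T.toFun)).symm.toLinearMap
/-- The range (image) of a partially defined linear map. -/
def pran {R E F : Type*} [Ring R] [AddCommGroup E] [Module R E] [AddCommGroup F] [Module R F]
    (T : E →ₗ.[R] F) : Set F :=
  Set.range fun x : T.domain => T x

/-- The kernel of a partially defined linear map, as a subset of the ambient space. -/
def pker {R E F : Type*} [Ring R] [AddCommGroup E] [Module R E] [AddCommGroup F] [Module R F]
    (T : E →ₗ.[R] F) : Set E :=
  {x | ∃ h : x ∈ T.domain, T ⟨x, h⟩ = 0}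
/-- A (self-adjoint) operator has discrete spectrum (its spectrum consists of isolated
eigenvalues of finite multiplicity) if and only if the inclusion of its domain, endowed with
the graph norm, into the ambient Hilbert space is a compact operator; we take this compactness
property as the definition. -/
def HasDiscreteSpectrum {E F : Type*} [NormedAddCommGroup E] [InnerProductSpace ℂ E]
    [NormedAddCommGroup F] [InnerProductSpace ℂ F] (T : E →ₗ.[ℂ] F) : Prop :=
  IsCompact (closure ((fun u : T.domain => (u : E)) ''
    {u : T.domain | ‖(u : E)‖ ^ 2 + ‖T u‖ ^ 2 ≤ 1}))

end Paper

namespace LinearPMap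

section Graph

variable {R E F : Type*} [Ring R] [AddCommGroup E] [Module R E] [AddCommGroup F] [Module R F]

theorem mem_graph_add_iff {S T : E →ₗ.[R] F} {x : E} {z : F} :
    (x, z) ∈ (S + T).graph ↔ ∃ a b, (x, a) ∈ S.graph ∧ (x, b) ∈ T.graph ∧ a + b = z := by
  constructor
  · intro hxz
    obtain ⟨⟨x, h⟩, rfl, rfl⟩ := (mem_graph_iff _).mp hxz
    exact ⟨_, _, S.mem_graph ⟨x, h.1⟩, T.mem_graph ⟨x, h.2⟩, rfl⟩
  · rintro ⟨a, b, hxa, hxb, rfl⟩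
    have hS := mem_domain_of_mem_graph hxa
    have hT := mem_domain_of_mem_graph hxb
    rw [(image_iff hS).mpr hxa, (image_iff hT).mpr hxb]
    exact (S + T).mem_graph ⟨x, hS, hT⟩

end Graph

section FormalAdjoint

open scoped InnerProductSpace

variable {𝕜 E F : Type*} [RCLike 𝕜] [NormedAddCommGroup E] [InnerProductSpace 𝕜 E]
  [NormedAddCommGroup F] [InnerProductSpace 𝕜 F]

theorem IsFormalAdjoint.inner_eq_of_mem_graph {T : E →ₗ.[𝕜] F} {S : F →ₗ.[𝕜] E}
    (h : T.IsFormalAdjoint S) {x u : E} {y v : F} (hxy : (x, y) ∈ T.graph)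
    (hvu : (v, u) ∈ S.graph) : ⟪y, v⟫_𝕜 = ⟪x, u⟫_𝕜 := by
  obtain ⟨x, rfl, rfl⟩ := (mem_graph_iff _).mp hxy
  obtain ⟨v, rfl, rfl⟩ := (mem_graph_iff _).mp hvu
  exact h x v

theorem IsFormalAdjoint.add {S T : E →ₗ.[𝕜] F} {S' T' : F →ₗ.[𝕜] E}
    (hS : S.IsFormalAdjoint S') (hT : T.IsFormalAdjoint T') :
    (S + T).IsFormalAdjoint (S' + T') := fun x y => by
  rw [add_apply, add_apply, inner_add_left, inner_add_right]
  exact congrArg₂ (· + ·) (hS ⟨x, x.2.1⟩ ⟨y, y.2.1⟩) (hT ⟨x, x.2.2⟩ ⟨y, y.2.2⟩)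

end FormalAdjoint

end LinearPMap

namespace Paper

open LinearPMap

section Composition

variable {R E F G : Type*} [Ring R] [AddCommGroup E] [Module R E]
  [AddCommGroup F] [Module R F] [AddCommGroup G] [Module R G]

theorem mem_pcomp_domain_iff {S : F →ₗ.[R] G} {T : E →ₗ.[R] F} {x : E} :
    x ∈ (pcomp S T).domain ↔ ∃ hx : x ∈ T.domain, T ⟨x, hx⟩ ∈ S.domain := by
  change x ∈ (S.domain.comap T.toFun).map T.domain.subtype ↔ _
  rw [Submodule.mem_map]
  constructor
  · rintro ⟨⟨y, hy⟩, hmem, rfl⟩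
    exact ⟨hy, hmem⟩
  · rintro ⟨hx, hmem⟩
    exact ⟨⟨x, hx⟩, hmem, rfl⟩

theorem pcomp_domain_le (S : F →ₗ.[R] G) (T : E →ₗ.[R] F) : (pcomp S T).domain ≤ T.domain :=
  fun _ hx => (mem_pcomp_domain_iff.mp hx).1

theorem pcomp_apply (S : F →ₗ.[R] G) (T : E →ₗ.[R] F) {x : E} (h : x ∈ (pcomp S T).domain)
    (hx : x ∈ T.domain) (hTx : T ⟨x, hx⟩ ∈ S.domain) :
    pcomp S T ⟨x, h⟩ = S ⟨T ⟨x, hx⟩, hTx⟩ := by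
  have hpre : (Submodule.equivMapOfInjective T.domain.subtype
      (Submodule.injective_subtype T.domain) (S.domain.comap T.toFun)).symm ⟨x, h⟩
      = ⟨⟨x, hx⟩, hTx⟩ := by
    rw [LinearEquiv.symm_apply_eq]
    rfl
  change S.toFun _ = _
  erw [LinearMap.comp_apply, hpre]
  rfl

theorem mem_graph_pcomp_iff {S : F →ₗ.[R] G} {T : E →ₗ.[R] F} {x : E} {z : G} :
    (x, z) ∈ (pcomp S T).graph ↔ ∃ y, (x, y) ∈ T.graph ∧ (y, z) ∈ S.graph := by
  constructor
  · intro hxz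
    obtain ⟨⟨x, h⟩, rfl, rfl⟩ := (mem_graph_iff _).mp hxz
    obtain ⟨hx, hTx⟩ := mem_pcomp_domain_iff.mp h
    refine ⟨_, T.mem_graph ⟨x, hx⟩, ?_⟩
    rw [pcomp_apply S T h hx hTx]
    exact S.mem_graph ⟨_, hTx⟩
  · rintro ⟨y, hxy, hyz⟩
    have hx := mem_domain_of_mem_graph hxy
    obtain rfl := (image_iff hx).mpr hxy
    have hTx := mem_domain_of_mem_graph hyz
    have h : x ∈ (pcomp S T).domain := mem_pcomp_domain_iff.mpr ⟨hx, hTx⟩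
    rw [(image_iff hTx).mpr hyz, ← pcomp_apply S T h hx hTx]
    exact (pcomp S T).mem_graph ⟨x, h⟩

theorem mem_pran_iff {T : E →ₗ.[R] F} {y : F} : y ∈ pran T ↔ ∃ x, (x, y) ∈ T.graph :=
  mem_range_iff

theorem mem_pker_iff {T : E →ₗ.[R] F} {x : E} : x ∈ pker T ↔ (x, 0) ∈ T.graph := by
  rw [mem_graph_iff]
  constructor
  · rintro ⟨h, h0⟩
    exact ⟨⟨x, h⟩, rfl, h0⟩
  · rintro ⟨⟨x, h⟩, rfl, h0⟩
    exact ⟨h, h0⟩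

theorem mem_graph_zero_of_pran_subset_pker {A : E →ₗ.[R] F} {B : F →ₗ.[R] G}
    (h : pran A ⊆ pker B) {x : E} {y : F} (hxy : (x, y) ∈ A.graph) : (y, 0) ∈ B.graph :=
  mem_pker_iff.mp (h (mem_pran_iff.mpr ⟨x, hxy⟩))

noncomputable def prestrict (T : E →ₗ.[R] F) {V : Submodule R E} {W : Submodule R F}
    (hV : V ≤ T.domain) (hVW : ∀ x y, x ∈ V → (x, y) ∈ T.graph → y ∈ W) : V →ₗ[R] W :=
  (T.toFun.comp (Submodule.inclusion hV)).codRestrict W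
    fun x => hVW _ _ x.2 (T.mem_graph (Submodule.inclusion hV x))

variable {T : E →ₗ.[R] F} {V : Submodule R E} {W : Submodule R F} {hV : V ≤ T.domain}
  {hVW : ∀ x y, x ∈ V → (x, y) ∈ T.graph → y ∈ W}

theorem mem_graph_prestrict (x : V) : ((x : E), (prestrict T hV hVW x : F)) ∈ T.graph :=
  T.mem_graph (Submodule.inclusion hV x)

theorem prestrict_apply_eq {x : V} {y : F} (hxy : ((x : E), y) ∈ T.graph) :
    (prestrict T hV hVW x : F) = y :=
  T.mem_graph_snd_inj (mem_graph_prestrict x) hxy rfl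

end Composition

section Eigenspace

variable {R E F : Type*} [CommRing R] [AddCommGroup E] [Module R E] [AddCommGroup F] [Module R F]

def peigenspace (D : E →ₗ.[R] E) (μ : R) : Submodule R E :=
  D.graph.comap (LinearMap.id.prod (μ • LinearMap.id))

theorem mem_peigenspace {D : E →ₗ.[R] E} {μ : R} {x : E} :
    x ∈ peigenspace D μ ↔ (x, μ • x) ∈ D.graph :=
  Iff.rfl

theorem mem_peigenspace_iff_exists {D : E →ₗ.[R] E} {μ : R} {x : E} :
    x ∈ peigenspace D μ ↔ ∃ h : x ∈ D.domain, D ⟨x, h⟩ = μ • x := by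
  rw [mem_peigenspace, mem_graph_iff]
  constructor
  · rintro ⟨⟨y, hy⟩, rfl, h⟩
    exact ⟨hy, h⟩
  · rintro ⟨hx, h⟩
    exact ⟨⟨x, hx⟩, rfl, h⟩

theorem peigenspace_le_domain (D : E →ₗ.[R] E) (μ : R) : peigenspace D μ ≤ D.domain :=
  fun _ hx => mem_domain_of_mem_graph hx

theorem peigenspace_zero (D : E →ₗ.[R] E) :
    peigenspace D 0 = (LinearMap.ker D.toFun).map D.domain.subtype := by
  ext x
  simp only [mem_peigenspace_iff_exists, zero_smul, Submodule.mem_map, LinearMap.mem_ker]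
  constructor
  · rintro ⟨hx, h⟩
    exact ⟨⟨x, hx⟩, h, rfl⟩
  · rintro ⟨⟨x, hx⟩, h, rfl⟩
    exact ⟨hx, h⟩

theorem finrank_ker_eq_finrank_peigenspace_zero (D : E →ₗ.[R] E) :
    Module.finrank R (LinearMap.ker D.toFun) = Module.finrank R (peigenspace D 0) := by
  rw [peigenspace_zero]
  exact (Submodule.equivMapOfInjective _ D.domain.injective_subtype _).finrank_eq

theorem mem_graph_of_mem_peigenspace_pcomp {S : F →ₗ.[R] E} {T : E →ₗ.[R] F} {μ : R} {x : E}
    {y : F} (hx : x ∈ peigenspace (pcomp S T) μ) (hxy : (x, y) ∈ T.graph) :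
    (y, μ • x) ∈ S.graph := by
  obtain ⟨y', hxy', hy'⟩ := mem_graph_pcomp_iff.mp (mem_peigenspace.mp hx)
  rwa [T.mem_graph_snd_inj hxy hxy' rfl]

end Eigenspace

/-! `E →A F →B G` is a complex (`pran A ⊆ pker B`), and so is `G →B' F →A' E`; in the
application `A'`, `B'` are the adjoints. In names, `left`, `mid` and `right` refer to the three
Laplacians `A' ∘ A`, `A ∘ A' + B' ∘ B` and `B ∘ B'`. -/
section HodgeDecomposition

variable {K E F G : Type*} [Field K] [AddCommGroup E] [Module K E] [AddCommGroup F] [Module K F]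
  [AddCommGroup G] [Module K G]
  {A : E →ₗ.[K] F} {A' : F →ₗ.[K] E} {B : F →ₗ.[K] G} {B' : G →ₗ.[K] F} {r : K}

theorem exists_of_mem_peigenspace_mid {w : F}
    (hw : w ∈ peigenspace (pcomp A A' + pcomp B' B) r) :
    ∃ p a q b, (w, p) ∈ A'.graph ∧ (p, a) ∈ A.graph ∧ (w, q) ∈ B.graph ∧ (q, b) ∈ B'.graph ∧
      a + b = r • w := by
  obtain ⟨a, b, ha, hb, hab⟩ := mem_graph_add_iff.mp (mem_peigenspace.mp hw)
  obtain ⟨p, hwp, hpa⟩ := mem_graph_pcomp_iff.mp ha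
  obtain ⟨q, hwq, hqb⟩ := mem_graph_pcomp_iff.mp hb
  exact ⟨p, a, q, b, hwp, hpa, hwq, hqb, hab⟩

theorem mem_peigenspace_left_of_mem_peigenspace_mid (hAB : pran B' ⊆ pker A') {w : F} {p : E}
    (hw : w ∈ peigenspace (pcomp A A' + pcomp B' B) r) (hwp : (w, p) ∈ A'.graph) :
    p ∈ peigenspace (pcomp A' A) r := by
  obtain ⟨p', a, q, b, hwp', hpa, -, hqb, hab⟩ := exists_of_mem_peigenspace_mid hw
  obtain rfl := A'.mem_graph_snd_inj hwp' hwp rfl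
  refine mem_peigenspace.mpr (mem_graph_pcomp_iff.mpr ⟨a, hpa, ?_⟩)
  have h := A'.graph.sub_mem (A'.graph.smul_mem r hwp')
    (mem_graph_zero_of_pran_subset_pker hAB hqb)
  rw [eq_sub_of_add_eq hab]
  simpa using h

theorem mem_peigenspace_right_of_mem_peigenspace_mid (hBA : pran A ⊆ pker B) {w : F} {q : G}
    (hw : w ∈ peigenspace (pcomp A A' + pcomp B' B) r) (hwq : (w, q) ∈ B.graph) :
    q ∈ peigenspace (pcomp B B') r := by
  obtain ⟨p, a, q', b, -, hpa, hwq', hqb, hab⟩ := exists_of_mem_peigenspace_mid hw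
  obtain rfl := B.mem_graph_snd_inj hwq' hwq rfl
  refine mem_peigenspace.mpr (mem_graph_pcomp_iff.mpr ⟨b, hqb, ?_⟩)
  have h := B.graph.sub_mem (B.graph.smul_mem r hwq')
    (mem_graph_zero_of_pran_subset_pker hBA hpa)
  rw [eq_sub_of_add_eq' hab]
  simpa using h

theorem mem_peigenspace_mid_of_mem_peigenspace_left (hBA : pran A ⊆ pker B) {u : E} {a : F}
    (hu : u ∈ peigenspace (pcomp A' A) r) (hua : (u, a) ∈ A.graph) :
    a ∈ peigenspace (pcomp A A' + pcomp B' B) r := by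
  have hAA' : (a, r • a) ∈ (pcomp A A').graph :=
    mem_graph_pcomp_iff.mpr ⟨r • u, mem_graph_of_mem_peigenspace_pcomp hu hua, by
      simpa using A.graph.smul_mem r hua⟩
  have hB'B : (a, 0) ∈ (pcomp B' B).graph :=
    mem_graph_pcomp_iff.mpr ⟨0, mem_graph_zero_of_pran_subset_pker hBA hua, B'.graph.zero_mem⟩
  exact mem_graph_add_iff.mpr ⟨_, _, hAA', hB'B, add_zero _⟩

theorem mem_peigenspace_mid_of_mem_peigenspace_right (hAB : pran B' ⊆ pker A') {v : G} {b : F}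
    (hv : v ∈ peigenspace (pcomp B B') r) (hvb : (v, b) ∈ B'.graph) :
    b ∈ peigenspace (pcomp A A' + pcomp B' B) r := by
  have hAA' : (b, 0) ∈ (pcomp A A').graph :=
    mem_graph_pcomp_iff.mpr ⟨0, mem_graph_zero_of_pran_subset_pker hAB hvb, A.graph.zero_mem⟩
  have hB'B : (b, r • b) ∈ (pcomp B' B).graph :=
    mem_graph_pcomp_iff.mpr ⟨r • v, mem_graph_of_mem_peigenspace_pcomp hv hvb, by
      simpa using B'.graph.smul_mem r hvb⟩
  exact mem_graph_add_iff.mpr ⟨_, _, hAA', hB'B, zero_add _⟩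

/-- `w ↦ (A' w, B w)` -/
noncomputable def peigenspaceMidToProd (hBA : pran A ⊆ pker B) (hAB : pran B' ⊆ pker A') (r : K) :
    peigenspace (pcomp A A' + pcomp B' B) r →ₗ[K]
      peigenspace (pcomp A' A) r × peigenspace (pcomp B B') r :=
  (prestrict A' ((peigenspace_le_domain _ r).trans (inf_le_left.trans (pcomp_domain_le _ _)))
      fun _ _ hw hwp => mem_peigenspace_left_of_mem_peigenspace_mid hAB hw hwp).prod
    (prestrict B ((peigenspace_le_domain _ r).trans (inf_le_right.trans (pcomp_domain_le _ _)))
      fun _ _ hw hwq => mem_peigenspace_right_of_mem_peigenspace_mid hBA hw hwq)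

/-- `(u, v) ↦ A u + B' v` -/
noncomputable def peigenspaceProdToMid (hBA : pran A ⊆ pker B) (hAB : pran B' ⊆ pker A') (r : K) :
    peigenspace (pcomp A' A) r × peigenspace (pcomp B B') r →ₗ[K]
      peigenspace (pcomp A A' + pcomp B' B) r :=
  (prestrict A ((peigenspace_le_domain _ r).trans (pcomp_domain_le _ _))
      fun _ _ hu hua => mem_peigenspace_mid_of_mem_peigenspace_left hBA hu hua).coprod
    (prestrict B' ((peigenspace_le_domain _ r).trans (pcomp_domain_le _ _))
      fun _ _ hv hvb => mem_peigenspace_mid_of_mem_peigenspace_right hAB hv hvb)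

theorem peigenspaceProdToMid_comp_peigenspaceMidToProd
    (hBA : pran A ⊆ pker B) (hAB : pran B' ⊆ pker A') (r : K) :
    peigenspaceProdToMid hBA hAB r ∘ₗ peigenspaceMidToProd hBA hAB r = r • LinearMap.id := by
  ext w
  obtain ⟨p, a, q, b, hwp, hpa, hwq, hqb, hab⟩ := exists_of_mem_peigenspace_mid w.2
  simp only [peigenspaceProdToMid, peigenspaceMidToProd, LinearMap.comp_apply,
    LinearMap.prod_apply, Function.prod, LinearMap.coprod_apply, Submodule.coe_add,
    LinearMap.smul_apply, LinearMap.id_apply, Submodule.coe_smul]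
  rw [prestrict_apply_eq (by rwa [prestrict_apply_eq hwp]),
    prestrict_apply_eq (by rwa [prestrict_apply_eq hwq]), hab]

theorem peigenspaceMidToProd_comp_peigenspaceProdToMid
    (hBA : pran A ⊆ pker B) (hAB : pran B' ⊆ pker A') (r : K) :
    peigenspaceMidToProd hBA hAB r ∘ₗ peigenspaceProdToMid hBA hAB r = r • LinearMap.id := by
  refine LinearMap.ext fun ⟨u, v⟩ => ?_
  obtain ⟨a, hua⟩ :=
    mem_domain_iff.mp ((peigenspace_le_domain _ r).trans (pcomp_domain_le _ _) u.2)
  obtain ⟨b, hvb⟩ :=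
    mem_domain_iff.mp ((peigenspace_le_domain _ r).trans (pcomp_domain_le _ _) v.2)
  simp only [peigenspaceProdToMid, peigenspaceMidToProd, LinearMap.comp_apply,
    LinearMap.prod_apply, Function.prod, LinearMap.coprod_apply, LinearMap.smul_apply,
    LinearMap.id_apply]
  refine Prod.ext (Subtype.ext (prestrict_apply_eq ?_)) (Subtype.ext (prestrict_apply_eq ?_)) <;>
    rw [Submodule.coe_add, prestrict_apply_eq hua, prestrict_apply_eq hvb]
  · simpa using A'.graph.add_mem (mem_graph_of_mem_peigenspace_pcomp u.2 hua)
      (mem_graph_zero_of_pran_subset_pker hAB hvb)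
  · simpa using B.graph.add_mem (mem_graph_zero_of_pran_subset_pker hBA hua)
      (mem_graph_of_mem_peigenspace_pcomp v.2 hvb)

noncomputable def peigenspaceMidEquiv (hBA : pran A ⊆ pker B) (hAB : pran B' ⊆ pker A')
    (hr : r ≠ 0) :
    peigenspace (pcomp A A' + pcomp B' B) r ≃ₗ[K]
      peigenspace (pcomp A' A) r × peigenspace (pcomp B B') r :=
  LinearEquiv.ofLinearMap (peigenspaceMidToProd hBA hAB r) (r⁻¹ • peigenspaceProdToMid hBA hAB r)
    (by rw [LinearMap.comp_smul, peigenspaceMidToProd_comp_peigenspaceProdToMid, smul_smul,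
      inv_mul_cancel₀ hr, one_smul])
    (by rw [LinearMap.smul_comp, peigenspaceProdToMid_comp_peigenspaceMidToProd, smul_smul,
      inv_mul_cancel₀ hr, one_smul])

theorem finrank_peigenspace_mid (hBA : pran A ⊆ pker B) (hAB : pran B' ⊆ pker A') (hr : r ≠ 0)
    [FiniteDimensional K (peigenspace (pcomp A' A) r)]
    [FiniteDimensional K (peigenspace (pcomp B B') r)] :
    Module.finrank K (peigenspace (pcomp A A' + pcomp B' B) r) =
      Module.finrank K (peigenspace (pcomp A' A) r) +
        Module.finrank K (peigenspace (pcomp B B') r) := by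
  rw [(peigenspaceMidEquiv hBA hAB hr).finrank_eq, Module.finrank_prod]

end HodgeDecomposition

section InnerProduct

open scoped InnerProductSpace

variable {𝕜 E F G : Type*} [RCLike 𝕜] [NormedAddCommGroup E] [InnerProductSpace 𝕜 E]
  [NormedAddCommGroup F] [InnerProductSpace 𝕜 F] [NormedAddCommGroup G] [InnerProductSpace 𝕜 G]

theorem isFormalAdjoint_pcomp_self {S : F →ₗ.[𝕜] E} {T : E →ₗ.[𝕜] F}
    (h : T.IsFormalAdjoint S) : (pcomp S T).IsFormalAdjoint (pcomp S T) := by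
  intro x y
  obtain ⟨a, hxa, ha⟩ := mem_graph_pcomp_iff.mp ((pcomp S T).mem_graph x)
  obtain ⟨b, hyb, hb⟩ := mem_graph_pcomp_iff.mp ((pcomp S T).mem_graph y)
  rw [IsFormalAdjoint.inner_eq_of_mem_graph h.symm ha hyb,
    IsFormalAdjoint.inner_eq_of_mem_graph h hxa hb]

theorem pran_adjoint_subset_pker_adjoint [CompleteSpace E] [CompleteSpace F]
    {A : E →ₗ.[𝕜] F} {B : F →ₗ.[𝕜] G} (hA : Dense (A.domain : Set E))
    (hB : Dense (B.domain : Set F)) (h : pran A ⊆ pker B) :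
    pran B.adjoint ⊆ pker A.adjoint := by
  intro y hy
  obtain ⟨v, hvy⟩ := mem_pran_iff.mp hy
  rw [adjoint_graph_eq_graph_adjoint hB, Submodule.mem_adjoint_iff] at hvy
  rw [mem_pker_iff, adjoint_graph_eq_graph_adjoint hA, Submodule.mem_adjoint_iff]
  intro a b hab
  simpa using hvy b 0 (mem_graph_zero_of_pran_subset_pker h hab)

end InnerProduct

section HilbertBasisEigenvectors

open scoped InnerProductSpace

variable {ι H : Type*} [NormedAddCommGroup H] [InnerProductSpace ℂ H] {D : H →ₗ.[ℂ] H}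

theorem inner_eq_zero_of_mem_peigenspace (hD : D.IsFormalAdjoint D) {μ ν : ℝ} (hμν : μ ≠ ν)
    {x y : H} (hx : x ∈ peigenspace D μ) (hy : y ∈ peigenspace D ν) : ⟪x, y⟫_ℂ = 0 := by
  obtain ⟨hx, hDx⟩ := mem_peigenspace_iff_exists.mp hx
  obtain ⟨hy, hDy⟩ := mem_peigenspace_iff_exists.mp hy
  have h := hD ⟨x, hx⟩ ⟨y, hy⟩
  rw [hDx, hDy, inner_smul_left, inner_smul_right, Complex.conj_ofReal] at h
  exact (mul_eq_mul_right_iff.mp h).resolve_left (by exact_mod_cast hμν)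

variable (e : HilbertBasis ι ℂ H) {l : ι → ℝ}

theorem peigenspace_eq_span (hD : D.IsFormalAdjoint D) (heig : ∀ i, e i ∈ peigenspace D (l i))
    {r : ℝ} (hfin : {i | l i = r}.Finite) :
    peigenspace D r = Submodule.span ℂ (e '' {i | l i = r}) := by
  refine le_antisymm (fun w hw => ?_) (Submodule.span_le.mpr ?_)
  · have hsupp : ∀ i ∉ hfin.toFinset, e.repr w i • e i = 0 := fun i hi => by
      rw [e.repr_apply_apply, inner_eq_zero_of_mem_peigenspace hD
        (by simpa using hi) (heig i) hw, zero_smul]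
    rw [(e.hasSum_repr w).unique (hasSum_sum_of_ne_finset_zero hsupp)]
    exact Submodule.sum_mem _ fun i hi => Submodule.smul_mem _ _
      (Submodule.subset_span ⟨i, hfin.mem_toFinset.mp hi, rfl⟩)
  · rintro _ ⟨i, rfl, rfl⟩
    exact heig i

theorem finiteDimensional_peigenspace (hD : D.IsFormalAdjoint D)
    (heig : ∀ i, e i ∈ peigenspace D (l i)) {r : ℝ} (hfin : {i | l i = r}.Finite) :
    FiniteDimensional ℂ (peigenspace D r) := by
  rw [peigenspace_eq_span e hD heig hfin]
  exact FiniteDimensional.span_of_finite ℂ (hfin.image e)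

theorem finrank_peigenspace_eq_card (hD : D.IsFormalAdjoint D)
    (heig : ∀ i, e i ∈ peigenspace D (l i)) {r : ℝ} (hfin : {i | l i = r}.Finite) :
    Module.finrank ℂ (peigenspace D r) = Nat.card {i | l i = r} := by
  have := hfin.fintype
  rw [peigenspace_eq_span e hD heig hfin, Set.image_eq_range, Nat.card_eq_fintype_card]
  exact finrank_span_eq_card (e.orthonormal.linearIndependent.comp _ Subtype.val_injective)

end HilbertBasisEigenvectors

section FiberSums

variable {ι α M : Type*}

theorem finite_setOf_eq_of_summable [AddCommGroup M] [TopologicalSpace M]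
    [IsTopologicalAddGroup M] [T1Space M] {l : ι → α} {g : α → M}
    (h : Summable fun i => g (l i)) {r : α} (hr : g r ≠ 0) : {i | l i = r}.Finite :=
  (Filter.eventually_cofinite.mp (h.tendsto_cofinite_zero.eventually_ne hr.symm)).subset
    fun i hi => by simp [show l i = r from hi]

theorem hasSum_card_fiber_smul [AddCommMonoid M] [TopologicalSpace M] [ContinuousAdd M]
    [RegularSpace M] {l : ι → α} (hfin : ∀ r, {i | l i = r}.Finite) {g : α → M} {s : M}
    (h : HasSum (fun i => g (l i)) s) :
    HasSum (fun r => Nat.card {i | l i = r} • g r) s := by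
  refine HasSum.sigma ((Equiv.sigmaFiberEquiv l).hasSum_iff.mpr h) fun r => ?_
  have : Fintype {i // l i = r} := (hfin r).fintype
  change HasSum (fun c : {i // l i = r} => g (l c)) _
  convert hasSum_fintype _ using 1
  rw [Finset.sum_congr rfl fun c _ => congrArg g c.2, Finset.sum_const, Finset.card_univ,
    ← Nat.card_eq_fintype_card]
  rfl

theorem sub_add_eq_of_card_fiber_eq_add [Zero α] [AddCommGroup M] [TopologicalSpace M]
    [IsTopologicalAddGroup M] [T3Space M] {l₁ l₂ l₃ : ι → α}
    (hfin₁ : ∀ r, {i | l₁ i = r}.Finite) (hfin₂ : ∀ r, {i | l₂ i = r}.Finite)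
    (hfin₃ : ∀ r, {i | l₃ i = r}.Finite) {g : α → M} {s₁ s₂ s₃ : M}
    (h₁ : HasSum (fun i => g (l₁ i)) s₁) (h₂ : HasSum (fun i => g (l₂ i)) s₂)
    (h₃ : HasSum (fun i => g (l₃ i)) s₃)
    (hcard : ∀ r ≠ 0,
      Nat.card {i | l₂ i = r} = Nat.card {i | l₁ i = r} + Nat.card {i | l₃ i = r}) :
    s₁ - s₂ + s₃ = Nat.card {i | l₁ i = 0} • g 0 - Nat.card {i | l₂ i = 0} • g 0 +
      Nat.card {i | l₃ i = 0} • g 0 := by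
  refine (((hasSum_card_fiber_smul hfin₁ h₁).sub (hasSum_card_fiber_smul hfin₂ h₂)).add
    (hasSum_card_fiber_smul hfin₃ h₃)).unique (hasSum_single 0 fun r hr => ?_)
  simp only [hcard r hr, add_nsmul]
  abel

end FiberSums

theorem stmt18_general {H₁ H₂ H₃ : Type*}
    [NormedAddCommGroup H₁] [InnerProductSpace ℂ H₁] [CompleteSpace H₁]
    [NormedAddCommGroup H₂] [InnerProductSpace ℂ H₂] [CompleteSpace H₂]
    [NormedAddCommGroup H₃] [InnerProductSpace ℂ H₃]
    (T₁ : H₁ →ₗ.[ℂ] H₂) (T₂ : H₂ →ₗ.[ℂ] H₃)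
    (hd₁ : Dense (T₁.domain : Set H₁))
    (hd₂ : Dense (T₂.domain : Set H₂))
    (hcpx : pran T₁ ⊆ pker T₂) :
    ∀ D₁ : H₁ →ₗ.[ℂ] H₁, D₁ = pcomp T₁.adjoint T₁ →
    ∀ Dmid : H₂ →ₗ.[ℂ] H₂, Dmid = pcomp T₁ T₁.adjoint + pcomp T₂.adjoint T₂ →
    ∀ D₂ : H₃ →ₗ.[ℂ] H₃, D₂ = pcomp T₂ T₂.adjoint →
    HasDiscreteSpectrum D₁ → HasDiscreteSpectrum Dmid → HasDiscreteSpectrum D₂ →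
    ∀ (e₁ : HilbertBasis ℕ ℂ H₁) (l₁ : ℕ → ℝ), (∀ k, 0 ≤ l₁ k) →
      (∀ k, ∃ hk : e₁ k ∈ D₁.domain, D₁ ⟨e₁ k, hk⟩ = (l₁ k : ℂ) • e₁ k) →
    ∀ (e₂ : HilbertBasis ℕ ℂ H₂) (l₂ : ℕ → ℝ), (∀ k, 0 ≤ l₂ k) →
      (∀ k, ∃ hk : e₂ k ∈ Dmid.domain, Dmid ⟨e₂ k, hk⟩ = (l₂ k : ℂ) • e₂ k) →
    ∀ (e₃ : HilbertBasis ℕ ℂ H₃) (l₃ : ℕ → ℝ), (∀ k, 0 ≤ l₃ k) →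
      (∀ k, ∃ hk : e₃ k ∈ D₂.domain, D₂ ⟨e₃ k, hk⟩ = (l₃ k : ℂ) • e₃ k) →
    (∀ t : ℝ, 0 < t → (Summable fun k => Real.exp (-t * l₁ k)) ∧
      (Summable fun k => Real.exp (-t * l₂ k)) ∧ (Summable fun k => Real.exp (-t * l₃ k))) →
    ∀ t : ℝ, 0 < t →
      (∑' k, Real.exp (-t * l₁ k)) - (∑' k, Real.exp (-t * l₂ k)) +
          (∑' k, Real.exp (-t * l₃ k)) =
        (Module.finrank ℂ (LinearMap.ker D₁.toFun) : ℝ) -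
          (Module.finrank ℂ (LinearMap.ker Dmid.toFun) : ℝ) +
          (Module.finrank ℂ (LinearMap.ker D₂.toFun) : ℝ) := by
  intro D₁ hD₁ Dmid hDmid D₂ hD₂ _ _ _ e₁ l₁ _ heig₁ e₂ l₂ _ heig₂ e₃ l₃ _ heig₃ hsum t ht
  subst hD₁ hDmid hD₂
  simp only [← mem_peigenspace_iff_exists] at heig₁ heig₂ heig₃
  obtain ⟨hs₁, hs₂, hs₃⟩ := hsum t ht
  have hfin {l : ℕ → ℝ} (hs : Summable fun k => Real.exp (-t * l k)) r : {k | l k = r}.Finite :=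
    finite_setOf_eq_of_summable (g := fun x => Real.exp (-t * x)) hs (Real.exp_pos _).ne'
  have hsym₁ := isFormalAdjoint_pcomp_self (adjoint_isFormalAdjoint hd₁).symm
  have hsym₂ := (isFormalAdjoint_pcomp_self (adjoint_isFormalAdjoint hd₁)).add
    (isFormalAdjoint_pcomp_self (adjoint_isFormalAdjoint hd₂).symm)
  have hsym₃ := isFormalAdjoint_pcomp_self (adjoint_isFormalAdjoint hd₂)
  have hcard r (hr : r ≠ 0) :
      Nat.card {k | l₂ k = r} = Nat.card {k | l₁ k = r} + Nat.card {k | l₃ k = r} := by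
    have := finiteDimensional_peigenspace e₁ hsym₁ heig₁ (hfin hs₁ r)
    have := finiteDimensional_peigenspace e₃ hsym₃ heig₃ (hfin hs₃ r)
    rw [← finrank_peigenspace_eq_card e₁ hsym₁ heig₁ (hfin hs₁ r),
      ← finrank_peigenspace_eq_card e₂ hsym₂ heig₂ (hfin hs₂ r),
      ← finrank_peigenspace_eq_card e₃ hsym₃ heig₃ (hfin hs₃ r)]
    exact finrank_peigenspace_mid hcpx (pran_adjoint_subset_pker_adjoint hd₁ hd₂ hcpx)
      (by exact_mod_cast hr)
  simp only [finrank_ker_eq_finrank_peigenspace_zero, ← Complex.ofReal_zero,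
    finrank_peigenspace_eq_card e₁ hsym₁ heig₁ (hfin hs₁ 0),
    finrank_peigenspace_eq_card e₂ hsym₂ heig₂ (hfin hs₂ 0),
    finrank_peigenspace_eq_card e₃ hsym₃ heig₃ (hfin hs₃ 0)]
  rw [sub_add_eq_of_card_fiber_eq_add (g := fun x => Real.exp (-t * x)) (hfin hs₁) (hfin hs₂)
    (hfin hs₃) hs₁.hasSum hs₂.hasSum hs₃.hasSum hcard]
  simp only [mul_zero, Real.exp_zero, nsmul_eq_mul, mul_one]

/-- **McKean–Singer formula.** Let `T₁ : H₁ → H₂`, `T₂ : H₂ → H₃` be closed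
densely defined operators with `im T₁ ⊆ ker T₂`, and suppose the Laplacians `Δ₁ = T₁†∘T₁`,
`Δ_mid = T₁∘T₁† + T₂†∘T₂`, `Δ₂ = T₂∘T₂†` all have discrete spectrum (eigenvalue sequences
`l₁, l₂, l₃` for Hilbert bases of eigenvectors) with trace class heat semigroups.  Then for
every `t > 0`,
`Tr(e^{-tΔ₁}) − Tr(e^{-tΔ_mid}) + Tr(e^{-tΔ₂}) = dim ker Δ₁ − dim ker Δ_mid + dim ker Δ₂`. -/
theorem stmt18 {H₁ H₂ H₃ : Type*}
    [NormedAddCommGroup H₁] [InnerProductSpace ℂ H₁] [CompleteSpace H₁]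
    [TopologicalSpace.SeparableSpace H₁]
    [NormedAddCommGroup H₂] [InnerProductSpace ℂ H₂] [CompleteSpace H₂]
    [TopologicalSpace.SeparableSpace H₂]
    [NormedAddCommGroup H₃] [InnerProductSpace ℂ H₃] [CompleteSpace H₃]
    [TopologicalSpace.SeparableSpace H₃]
    (T₁ : H₁ →ₗ.[ℂ] H₂) (T₂ : H₂ →ₗ.[ℂ] H₃)
    (hd₁ : Dense (T₁.domain : Set H₁)) (hc₁ : T₁.IsClosed)
    (hd₂ : Dense (T₂.domain : Set H₂)) (hc₂ : T₂.IsClosed)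
    (hcpx : pran T₁ ⊆ pker T₂) :
    ∀ D₁ : H₁ →ₗ.[ℂ] H₁, D₁ = pcomp T₁.adjoint T₁ →
    ∀ Dmid : H₂ →ₗ.[ℂ] H₂, Dmid = pcomp T₁ T₁.adjoint + pcomp T₂.adjoint T₂ →
    ∀ D₂ : H₃ →ₗ.[ℂ] H₃, D₂ = pcomp T₂ T₂.adjoint →
    HasDiscreteSpectrum D₁ → HasDiscreteSpectrum Dmid → HasDiscreteSpectrum D₂ →
    ∀ (e₁ : HilbertBasis ℕ ℂ H₁) (l₁ : ℕ → ℝ), (∀ k, 0 ≤ l₁ k) →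
      (∀ k, ∃ hk : e₁ k ∈ D₁.domain, D₁ ⟨e₁ k, hk⟩ = (l₁ k : ℂ) • e₁ k) →
    ∀ (e₂ : HilbertBasis ℕ ℂ H₂) (l₂ : ℕ → ℝ), (∀ k, 0 ≤ l₂ k) →
      (∀ k, ∃ hk : e₂ k ∈ Dmid.domain, Dmid ⟨e₂ k, hk⟩ = (l₂ k : ℂ) • e₂ k) →
    ∀ (e₃ : HilbertBasis ℕ ℂ H₃) (l₃ : ℕ → ℝ), (∀ k, 0 ≤ l₃ k) →
      (∀ k, ∃ hk : e₃ k ∈ D₂.domain, D₂ ⟨e₃ k, hk⟩ = (l₃ k : ℂ) • e₃ k) →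
    (∀ t : ℝ, 0 < t → (Summable fun k => Real.exp (-t * l₁ k)) ∧
      (Summable fun k => Real.exp (-t * l₂ k)) ∧ (Summable fun k => Real.exp (-t * l₃ k))) →
    ∀ t : ℝ, 0 < t →
      (∑' k, Real.exp (-t * l₁ k)) - (∑' k, Real.exp (-t * l₂ k)) +
          (∑' k, Real.exp (-t * l₃ k)) =
        (Module.finrank ℂ (LinearMap.ker D₁.toFun) : ℝ) -
          (Module.finrank ℂ (LinearMap.ker Dmid.toFun) : ℝ) +
          (Module.finrank ℂ (LinearMap.ker D₂.toFun) : ℝ) :=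
  stmt18_general T₁ T₂ hd₁ hd₂ hcpx

end Paper
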